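/- arXiv:2312.03916 — 5 statements merged into one kernel-verified Lean document; each statement's English description precedes it below -/
import Mathlib

section
/- Let f : ℂ → ℂ be analytic on the open lower half plane {z : Im z < 0}, continuous on the closed lower half plane, bounded there by a constant C̃, and suppose there exist constants c, c̃ > 0 such that |f(k)| ≤ c̃·e^{-c|k|} for all real k. Then f(z) = 0 for every z with Im z ≤ 0. -/
/-!
Phragmén–Lindelöf in the two quadrants of the lower half-plane, applied to `exp (± c z) * f z`,
upgrades the decay on the real axis to `‖f z‖ ≤ M * exp (-c * |Re z|)` on the whole closed lower
half-plane. So on each line `Im z = y ≤ 0` the restriction `φ` of `f` has a Fourier–Laplace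
transform `Φ ζ = ∫ φ x * exp (-I * ζ * x)` that is holomorphic in the strip `|Im ζ| < c`.
For `ξ > 0`, shifting the contour down to `Im z = t` gives `Φ ξ = O(exp (ξ * (t - y)))`, and
`t → -∞` shows `Φ ξ = 0`. By the identity theorem `Φ` vanishes on the strip, hence so does the
Fourier transform of `φ`, and Fourier inversion gives `φ = 0`.
-/

open Complex Set MeasureTheory Filter Topology Real FourierTransform ComplexConjugate

lemma integrable_exp_neg_mul_abs {a : ℝ} (ha : 0 < a) :
    Integrable fun x : ℝ => rexp (-a * |x|) := by
  refine Integrable.of_integral_ne_zero ?_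
  rw [integral_comp_abs (f := fun x => rexp (-a * x)), integral_exp_mul_Ioi (neg_neg_iff_pos.2 ha)]
  simp [ha.ne']

lemma integrable_of_norm_le_mul_exp_neg_abs {φ : ℝ → ℂ} {M c : ℝ} (hc : 0 < c)
    (hφ : Continuous φ) (hbound : ∀ x, ‖φ x‖ ≤ M * rexp (-c * |x|)) : Integrable φ :=
  ((integrable_exp_neg_mul_abs hc).const_mul M).mono' hφ.aestronglyMeasurable (.of_forall hbound)

lemma norm_le_mul_exp_neg_re_of_re_nonneg {f : ℂ → ℂ} {C M c : ℝ}
    (hdiff : DifferentiableOn ℂ f {z | z.im < 0}) (hcont : ContinuousOn f {z | z.im ≤ 0})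
    (hbound : ∀ z : ℂ, z.im ≤ 0 → ‖f z‖ ≤ C) (hC : C ≤ M)
    (hdecay : ∀ x : ℝ, ‖f x‖ ≤ M * rexp (-c * |x|))
    {z : ℂ} (hre : 0 ≤ z.re) (him : z.im ≤ 0) :
    ‖f z‖ ≤ M * rexp (-c * z.re) := by
  have hnorm : ∀ w : ℂ, ‖cexp (c * w) * f w‖ = rexp (c * w.re) * ‖f w‖ := fun w => by
    simp [Complex.norm_exp]
  have hquadrant : Ioi 0 ×ℂ Iio 0 ⊆ {w : ℂ | w.im < 0} := fun w hw => hw.2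
  have hclosure : closure (Ioi 0 ×ℂ Iio 0) ⊆ {w : ℂ | w.im ≤ 0} := by
    rw [closure_reProdIm, closure_Ioi, closure_Iio]
    exact fun w hw => hw.2
  have hPL : ‖cexp (c * z) * f z‖ ≤ M := by
    refine PhragmenLindelof.quadrant_IV (f := fun w => cexp (c * w) * f w) ⟨?_, ?_⟩
      ⟨1, one_lt_two, |c|, ?_⟩ (fun x hx => ?_) (fun x hx => ?_) hre him
    · exact (by fun_prop : Differentiable ℂ fun w => cexp (c * w)).differentiableOn.mul
        (hdiff.mono hquadrant)
    · exact (by fun_prop : Continuous fun w => cexp (c * w)).continuousOn.mul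
        (hcont.mono hclosure)
    · refine Asymptotics.IsBigO.of_bound C (eventually_inf_principal.2 (.of_forall fun w hw => ?_))
      rw [hnorm, Real.rpow_one, Real.norm_of_nonneg (exp_pos _).le, mul_comm C]
      refine mul_le_mul (exp_le_exp.2 ?_) (hbound w (le_of_lt hw.2)) (norm_nonneg _)
        (exp_pos _).le
      exact (le_abs_self _).trans (by rw [abs_mul]; gcongr; exact abs_re_le_norm w)
    · rw [hnorm, ofReal_re]
      calc rexp (c * x) * ‖f x‖ ≤ rexp (c * x) * (M * rexp (-c * x)) := by
            gcongr; simpa [abs_of_nonneg hx] using hdecay x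
        _ = M := by rw [mul_left_comm, ← Real.exp_add]; simp
    · rw [hnorm]
      simpa using (hbound _ (by simpa using hx)).trans hC
  rw [hnorm] at hPL
  calc ‖f z‖ = rexp (-c * z.re) * (rexp (c * z.re) * ‖f z‖) := by
        rw [← mul_assoc, ← Real.exp_add]; simp
    _ ≤ M * rexp (-c * z.re) := by rw [mul_comm M]; gcongr

lemma norm_le_mul_exp_neg_abs_re {f : ℂ → ℂ} {C M c : ℝ}
    (hdiff : DifferentiableOn ℂ f {z | z.im < 0}) (hcont : ContinuousOn f {z | z.im ≤ 0})
    (hbound : ∀ z : ℂ, z.im ≤ 0 → ‖f z‖ ≤ C) (hC : C ≤ M)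
    (hdecay : ∀ x : ℝ, ‖f x‖ ≤ M * rexp (-c * |x|)) {z : ℂ} (him : z.im ≤ 0) :
    ‖f z‖ ≤ M * rexp (-c * |z.re|) := by
  rcases le_total 0 z.re with hre | hre
  · rw [abs_of_nonneg hre]
    exact norm_le_mul_exp_neg_re_of_re_nonneg hdiff hcont hbound hC hdecay hre him
  -- Reflection in the imaginary axis swaps the two quadrants and preserves holomorphy.
  set g : ℂ → ℂ := conj ∘ (f ∘ Neg.neg) ∘ conj with hg
  have hgdiff : DifferentiableOn ℂ g {w | w.im < 0} := fun w hw =>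
    (differentiableAt_conj_conj_iff.2 <| (hdiff.differentiableAt <|
      (isOpen_lt continuous_im continuous_const).mem_nhds (by simpa using hw)).comp _
      differentiable_neg.differentiableAt).differentiableWithinAt
  have hgcont : ContinuousOn g {w | w.im ≤ 0} :=
    continuous_conj.comp_continuousOn <| hcont.comp (by fun_prop) fun w hw => by simpa using hw
  have hgz := norm_le_mul_exp_neg_re_of_re_nonneg (f := g) hgdiff hgcont
    (fun w hw => by simpa [hg] using hbound (-conj w) (by simpa using hw)) hC
    (fun x => by simpa [hg] using hdecay (-x)) (z := -conj z) (by simpa using hre)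
    (by simpa using him)
  simpa [hg, abs_of_nonpos hre] using hgz

lemma integral_add_mul_I_eq_of_strip {g : ℂ → ℂ} {a b M c : ℝ} (hab : a ≤ b) (hc : 0 < c)
    (hcont : ContinuousOn g (im ⁻¹' Icc a b)) (hdiff : DifferentiableOn ℂ g (im ⁻¹' Ioo a b))
    (hbound : ∀ z : ℂ, z.im ∈ Icc a b → ‖g z‖ ≤ M * rexp (-c * |z.re|)) :
    ∫ x : ℝ, g (x + a * I) = ∫ x : ℝ, g (x + b * I) := by
  have hline : ∀ y ∈ Icc a b, Integrable fun x : ℝ => g (x + y * I) := fun y hy =>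
    integrable_of_norm_le_mul_exp_neg_abs hc
      (hcont.comp_continuous (by fun_prop) fun x => by simpa using hy)
      fun x => by simpa using hbound (x + y * I) (by simpa using hy)
  have hside : ∀ s : ℝ, ‖∫ y in a..b, g (s + y * I)‖ ≤ M * rexp (-c * |s|) * (b - a) := by
    intro s
    have := intervalIntegral.norm_integral_le_of_norm_le_const (C := M * rexp (-c * |s|))
      (f := fun y : ℝ => g (s + y * I)) (a := a) (b := b) fun y hy => by
        rw [uIoc_of_le hab] at hy
        simpa using hbound (s + y * I) (by simpa using Ioc_subset_Icc_self hy)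
    rwa [abs_of_nonneg (sub_nonneg.2 hab)] at this
  have hside_lim : ∀ s : ℝ → ℝ, Tendsto (fun R => |s R|) atTop atTop →
      Tendsto (fun R => ∫ y in a..b, g (s R + y * I)) atTop (𝓝 0) := fun s hs => by
    refine squeeze_zero_norm (fun R => hside (s R)) ?_
    have hexp : Tendsto (fun R => rexp (-c * |s R|)) atTop (𝓝 0) :=
      tendsto_exp_atBot.comp (hs.const_mul_atTop_of_neg (neg_neg_of_pos hc))
    simpa using (hexp.const_mul M).mul_const (b - a)
  have hrect : ∀ R : ℝ, (∫ x in -R..R, g (x + a * I)) - (∫ x in -R..R, g (x + b * I)) +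
      I • (∫ y in a..b, g (R + y * I)) - I • (∫ y in a..b, g ((-R : ℝ) + y * I)) = 0 := by
    intro R
    refine integral_boundary_rect_eq_zero_of_continuousOn_of_differentiableOn g ⟨-R, a⟩ ⟨R, b⟩
      (hcont.mono fun z hz => ?_) (hdiff.mono fun z hz => ?_)
    · simpa [uIcc_of_le hab] using hz.2
    · simpa [hab] using hz.2
  have hlim_line : ∀ y ∈ Icc a b,
      Tendsto (fun R => ∫ x in -R..R, g (x + y * I)) atTop (𝓝 (∫ x : ℝ, g (x + y * I))) :=
    fun y hy => intervalIntegral_tendsto_integral (hline y hy) tendsto_neg_atTop_atBot tendsto_id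
  have hlim := (((hlim_line a ⟨le_rfl, hab⟩).sub (hlim_line b ⟨hab, le_rfl⟩)).add
    ((hside_lim id tendsto_abs_atTop_atTop).const_smul I)).sub
    ((hside_lim Neg.neg (by simpa using tendsto_abs_atTop_atTop)).const_smul I)
  simp only [id, smul_zero, add_zero, sub_zero] at hlim
  exact sub_eq_zero.1
    (tendsto_nhds_unique hlim (tendsto_const_nhds.congr fun R => (hrect R).symm))

noncomputable def fourierLaplace (φ : ℝ → ℂ) (ζ : ℂ) : ℂ := ∫ x : ℝ, φ x * cexp (-I * ζ * x)

lemma norm_mul_cexp_le {φ : ℝ → ℂ} {M c ε : ℝ} (hbound : ∀ x, ‖φ x‖ ≤ M * rexp (-c * |x|))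
    {ζ : ℂ} (hζ : |ζ.im| ≤ c - ε) (x : ℝ) :
    ‖φ x * cexp (-I * ζ * x)‖ ≤ M * rexp (-ε * |x|) := by
  have hexp : ‖cexp (-I * ζ * x)‖ ≤ rexp ((c - ε) * |x|) := by
    have hre : (-I * ζ * x).re = ζ.im * x := by simp
    rw [Complex.norm_exp, hre, exp_le_exp]
    calc ζ.im * x ≤ |ζ.im| * |x| := (le_abs_self _).trans (abs_mul _ _).le
      _ ≤ (c - ε) * |x| := mul_le_mul_of_nonneg_right hζ (abs_nonneg x)
  calc ‖φ x * cexp (-I * ζ * x)‖ ≤ M * rexp (-c * |x|) * rexp ((c - ε) * |x|) := by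
        rw [norm_mul]
        exact mul_le_mul (hbound x) hexp (norm_nonneg _) ((norm_nonneg _).trans (hbound x))
    _ = M * rexp (-ε * |x|) := by rw [mul_assoc, ← Real.exp_add]; ring_nf

lemma abs_le_mul_exp {ε : ℝ} (hε : 0 < ε) (x : ℝ) : |x| ≤ ε⁻¹ * rexp (ε * |x|) := by
  rw [le_inv_mul_iff₀ hε]
  linarith [add_one_le_exp (ε * |x|)]

lemma differentiableAt_fourierLaplace {φ : ℝ → ℂ} {M c : ℝ} (hφ : Continuous φ)
    (hbound : ∀ x, ‖φ x‖ ≤ M * rexp (-c * |x|)) {ζ₀ : ℂ} (hζ₀ : |ζ₀.im| < c) :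
    DifferentiableAt ℂ (fourierLaplace φ) ζ₀ := by
  set ε := (c - |ζ₀.im|) / 2 with hε
  have hε_pos : 0 < ε := by linarith
  have hball : ∀ ζ ∈ Metric.ball ζ₀ ε, |ζ.im| ≤ c - ε := fun ζ hζ => by
    have := (abs_im_le_norm (ζ - ζ₀)).trans (mem_ball_iff_norm.1 hζ).le
    rw [sub_im] at this
    linarith [abs_sub_abs_le_abs_sub ζ.im ζ₀.im]
  have hcont : ∀ ζ : ℂ, Continuous fun x : ℝ => φ x * cexp (-I * ζ * x) := fun ζ => by fun_prop
  refine (hasDerivAt_integral_of_dominated_loc_of_deriv_le (Metric.ball_mem_nhds ζ₀ hε_pos)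
    (F' := fun ζ x => φ x * (cexp (-I * ζ * x) * (-I * x)))
    (bound := fun x => M * (ε / 2)⁻¹ * rexp (-(ε / 2) * |x|))
    (.of_forall fun ζ => (hcont ζ).aestronglyMeasurable)
    (((integrable_exp_neg_mul_abs hε_pos).const_mul M).mono' (hcont ζ₀).aestronglyMeasurable
      (.of_forall (norm_mul_cexp_le hbound (hball ζ₀ (Metric.mem_ball_self hε_pos)))))
    (by fun_prop : Continuous _).aestronglyMeasurable
    (.of_forall fun x ζ hζ => ?_)
    ((integrable_exp_neg_mul_abs (half_pos hε_pos)).const_mul _)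
    (.of_forall fun x ζ _ => ?_)).2.differentiableAt
  · calc ‖φ x * (cexp (-I * ζ * x) * (-I * x))‖ = ‖φ x * cexp (-I * ζ * x)‖ * |x| := by
          simp [mul_assoc]
      _ ≤ M * rexp (-ε * |x|) * ((ε / 2)⁻¹ * rexp (ε / 2 * |x|)) :=
          mul_le_mul (norm_mul_cexp_le hbound (hball ζ hζ) x) (abs_le_mul_exp (half_pos hε_pos) x)
            (abs_nonneg _) ((norm_nonneg _).trans (norm_mul_cexp_le hbound (hball ζ hζ) x))
      _ = M * (ε / 2)⁻¹ * rexp (-(ε / 2) * |x|) := by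
          rw [mul_mul_mul_comm, ← Real.exp_add]; ring_nf
  · simpa using (((hasDerivAt_id ζ).const_mul (-I)).mul_const (x : ℂ)).cexp.const_mul (φ x)

lemma fourier_eq_fourierLaplace (φ : ℝ → ℂ) (w : ℝ) :
    𝓕 φ w = fourierLaplace φ (2 * π * w) := by
  rw [Real.fourier_real_eq_integral_exp_smul, fourierLaplace]
  refine integral_congr_ae (.of_forall fun v => ?_)
  simp only [smul_eq_mul]
  rw [mul_comm]
  push_cast
  ring_nf

lemma eq_zero_of_fourierLaplace_eq_zero {φ : ℝ → ℂ} {M c : ℝ} (hc : 0 < c) (hφ : Continuous φ)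
    (hbound : ∀ x, ‖φ x‖ ≤ M * rexp (-c * |x|))
    (hpos : ∀ ξ : ℝ, 0 < ξ → fourierLaplace φ ξ = 0) : φ = 0 := by
  set S : Set ℂ := im ⁻¹' Ioo (-c) c
  have hS_open : IsOpen S := isOpen_Ioo.preimage continuous_im
  have hS_conn : IsPreconnected S := ((convex_Ioo (-c) c).linear_preimage imLm).isPreconnected
  have hreal_mem : ∀ x : ℝ, (x : ℂ) ∈ S := fun x => by simpa [S] using hc
  have hanalytic : AnalyticOnNhd ℂ (fourierLaplace φ) S :=
    DifferentiableOn.analyticOnNhd (fun ζ hζ => (differentiableAt_fourierLaplace hφ hbound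
      (abs_lt.2 hζ)).differentiableWithinAt) hS_open
  have hfreq : ∃ᶠ ζ in 𝓝[≠] (1 : ℂ), fourierLaplace φ ζ = 0 := by
    have hofReal : Tendsto ((↑) : ℝ → ℂ) (𝓝[>] (1 : ℝ)) (𝓝[≠] 1) :=
      tendsto_nhdsWithin_of_tendsto_nhds_of_eventually_within _
        ((continuous_ofReal.tendsto' 1 1 ofReal_one).mono_left nhdsWithin_le_nhds)
        (eventually_nhdsWithin_of_forall fun x hx => by simpa using hx.ne')
    have hpos' : ∀ᶠ x : ℝ in 𝓝[>] 1, fourierLaplace φ x = 0 :=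
      eventually_nhdsWithin_of_forall fun x hx => hpos x (one_pos.trans hx)
    exact hofReal.frequently hpos'.frequently
  have hzero := hanalytic.eqOn_zero_of_preconnected_of_frequently_eq_zero hS_conn
    (hreal_mem 1) hfreq
  have hfourier : 𝓕 φ = 0 := funext fun w => by
    rw [fourier_eq_fourierLaplace]
    exact_mod_cast hzero (hreal_mem (2 * π * w))
  have := hφ.fourierInv_fourier_eq (integrable_of_norm_le_mul_exp_neg_abs hc hφ hbound)
    (by rw [hfourier]; exact integrable_zero _ _ _)
  rw [← this, hfourier]
  ext x
  simp [Real.fourierInv_eq]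

lemma fourierLaplace_eq_zero_of_lowerHalfPlane {f : ℂ → ℂ} {M c : ℝ} (hc : 0 < c)
    (hdiff : DifferentiableOn ℂ f {z | z.im < 0}) (hcont : ContinuousOn f {z | z.im ≤ 0})
    (hbound : ∀ z : ℂ, z.im ≤ 0 → ‖f z‖ ≤ M * rexp (-c * |z.re|))
    {y ξ : ℝ} (hy : y ≤ 0) (hξ : 0 < ξ) :
    fourierLaplace (fun x => f (x + y * I)) ξ = 0 := by
  set g : ℂ → ℂ := fun z => f z * cexp (-I * ξ * z) with hg
  have hg_norm : ∀ z, ‖g z‖ = ‖f z‖ * rexp (ξ * z.im) := fun z => by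
    simp [hg, Complex.norm_exp]
  set J : ℝ → ℂ := fun t => ∫ x : ℝ, g (x + t * I)
  have hshift : ∀ t ≤ y, J t = J y := fun t ht =>
    integral_add_mul_I_eq_of_strip ht hc
      ((hcont.mul (by fun_prop : Continuous fun z => cexp (-I * ξ * z)).continuousOn).mono
        fun z hz => hz.2.trans hy)
      ((hdiff.mul (by fun_prop : Differentiable ℂ fun z => cexp (-I * ξ * z)).differentiableOn).mono
        fun z hz => hz.2.trans_le hy)
      fun z hz => by
        have him : z.im ≤ 0 := hz.2.trans hy
        rw [hg_norm]
        have hexp : rexp (ξ * z.im) ≤ 1 :=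
          exp_le_one_iff.2 (mul_nonpos_of_nonneg_of_nonpos hξ.le him)
        simpa using mul_le_mul (hbound z him) hexp (exp_pos _).le
          ((norm_nonneg _).trans (hbound z him))
  have hJ_bound : ∀ t ≤ 0, ‖J t‖ ≤ rexp (ξ * t) * (M * ∫ x : ℝ, rexp (-c * |x|)) := fun t ht => by
    rw [← integral_const_mul, ← integral_const_mul]
    refine norm_integral_le_of_norm_le (((integrable_exp_neg_mul_abs hc).const_mul M).const_mul _)
      (.of_forall fun x => ?_)
    rw [hg_norm, mul_comm]
    simpa using mul_le_mul_of_nonneg_left (hbound (x + t * I) (by simpa using ht))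
      (exp_pos (ξ * t)).le
  have hJ_lim : Tendsto J atBot (𝓝 0) := by
    refine squeeze_zero_norm' (eventually_le_atBot 0 |>.mono hJ_bound) ?_
    simpa using (tendsto_exp_atBot.comp (tendsto_id.const_mul_atBot hξ)).mul_const
      (M * ∫ x : ℝ, rexp (-c * |x|))
  have hJy : J y = 0 := tendsto_nhds_unique (tendsto_const_nhds.congr'
    ((eventually_le_atBot y).mono fun t ht => (hshift t ht).symm)) hJ_lim
  have : J y = cexp (ξ * y) * fourierLaplace (fun x => f (x + y * I)) ξ := by
    rw [fourierLaplace, ← integral_const_mul]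
    refine integral_congr_ae (.of_forall fun x => ?_)
    simp only [hg]
    rw [mul_left_comm, ← Complex.exp_add]
    congr 2
    linear_combination (-(ξ * y) : ℂ) * I_sq
  simpa [hJy, Complex.exp_ne_zero] using this

theorem stmt4_general (f : ℂ → ℂ) (Ctil c ctil : ℝ)
    (hc : 0 < c)
    (hdiff : DifferentiableOn ℂ f {z : ℂ | z.im < 0})
    (hcont : ContinuousOn f {z : ℂ | z.im ≤ 0})
    (hbound : ∀ z : ℂ, z.im ≤ 0 → ‖f z‖ ≤ Ctil)
    (hdecay : ∀ k : ℝ, ‖f (k : ℂ)‖ ≤ ctil * Real.exp (-c * |k|)) :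
    ∀ z : ℂ, z.im ≤ 0 → f z = 0 := by
  intro z hz
  have hdecay' : ∀ x : ℝ, ‖f x‖ ≤ max ctil Ctil * rexp (-c * |x|) := fun x =>
    (hdecay x).trans (mul_le_mul_of_nonneg_right (le_max_left _ _) (exp_pos _).le)
  have hdecay_re : ∀ w : ℂ, w.im ≤ 0 → ‖f w‖ ≤ max ctil Ctil * rexp (-c * |w.re|) := fun w hw =>
    norm_le_mul_exp_neg_abs_re hdiff hcont hbound (le_max_right _ _) hdecay' hw
  have hline : (fun x : ℝ => f (x + z.im * I)) = 0 :=
    eq_zero_of_fourierLaplace_eq_zero hc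
      (hcont.comp_continuous (by fun_prop) fun x => by simpa using hz)
      (fun x => by simpa using hdecay_re (x + z.im * I) (by simpa using hz))
      fun ξ hξ => fourierLaplace_eq_zero_of_lowerHalfPlane hc hdiff hcont hdecay_re hz hξ
  simpa [re_add_im] using congr_fun hline z.re

/-- No-go result: an `f` analytic on the open lower half plane, continuous and bounded on
the closed lower half plane, and exponentially decaying on the real axis, must vanish
identically on the closed lower half plane. -/
theorem stmt4 (f : ℂ → ℂ) (Ctil c ctil : ℝ)
    (hc : 0 < c) (hctil : 0 < ctil)
    (hdiff : DifferentiableOn ℂ f {z : ℂ | z.im < 0})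
    (hcont : ContinuousOn f {z : ℂ | z.im ≤ 0})
    (hbound : ∀ z : ℂ, z.im ≤ 0 → ‖f z‖ ≤ Ctil)
    (hdecay : ∀ k : ℝ, ‖f (k : ℂ)‖ ≤ ctil * Real.exp (-c * |k|)) :
    ∀ z : ℂ, z.im ≤ 0 → f z = 0 :=
  stmt4_general f Ctil c ctil hc hdiff hcont hbound hdecay
end

section
/- Fix 0 < β < 1 and define f(z) = 1/(C_β · exp((1+iz)^β)) with C_β = 2π e^{-2^β}, where the power w^β uses the principal branch. Then f is analytic on the open lower half plane {z : Im z < 0}, and for every α > 0 there is a constant C such that |z|^α · |f(z)| ≤ C for all z with Im z ≤ 0. -/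
open Complex

/-! Writing `w = 1 + i z`, the closed lower half plane `Im z ≤ 0` becomes the half plane
`Re w ≥ 1`, where `|arg w| ≤ π/2`. Hence `Re w^β ≥ cos(βπ/2) |w|^β` with `cos(βπ/2) > 0`, so
`|f z| ≲ exp(-cos(βπ/2) |w|^β)`, which beats every power `|z|^α ≤ 2^α |w|^α`. -/

lemma pow_mul_exp_neg_mul_le {c : ℝ} (hc : 0 < c) (n : ℕ) {u : ℝ} (hu : 0 ≤ u) :
    u ^ n * Real.exp (-(c * u)) ≤ n.factorial / c ^ n := by
  have hexp : (c * u) ^ n / n.factorial ≤ Real.exp (c * u) :=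
    Real.pow_div_factorial_le_exp (c * u) (mul_nonneg hc.le hu) n
  calc u ^ n * Real.exp (-(c * u)) = (c * u) ^ n / Real.exp (c * u) / c ^ n := by
        rw [mul_pow, Real.exp_neg]; field_simp
    _ ≤ n.factorial / c ^ n := by
        gcongr
        rw [div_le_iff₀ (Real.exp_pos _)]
        exact ((div_le_iff₀ (by positivity)).mp hexp).trans_eq (mul_comm _ _)

lemma rpow_mul_exp_neg_mul_rpow_le {α β c r : ℝ} (hc : 0 < c) (hr : 1 ≤ r)
    {n : ℕ} (hn : α ≤ β * n) :
    r ^ α * Real.exp (-(c * r ^ β)) ≤ n.factorial / c ^ n := by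
  have hrα : r ^ α ≤ (r ^ β) ^ n := by
    rw [← Real.rpow_natCast, ← Real.rpow_mul (by linarith)]
    exact Real.rpow_le_rpow_of_exponent_le hr hn
  calc r ^ α * Real.exp (-(c * r ^ β)) ≤ (r ^ β) ^ n * Real.exp (-(c * r ^ β)) := by gcongr
    _ ≤ _ := pow_mul_exp_neg_mul_le hc n (by positivity)

lemma cos_mul_pi_div_two_mul_rpow_le_re_cpow {w : ℂ} (hw : 0 ≤ w.re) {β : ℝ} (hβ0 : 0 ≤ β)
    (hβ2 : β ≤ 2) : Real.cos (β * (Real.pi / 2)) * ‖w‖ ^ β ≤ (w ^ (β : ℂ)).re := by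
  have harg : |arg w| ≤ Real.pi / 2 := abs_arg_le_pi_div_two_iff.mpr hw
  rw [cpow_ofReal_re, mul_comm, ← Real.cos_abs (arg w * β), abs_mul, abs_of_nonneg hβ0]
  gcongr
  apply Real.cos_le_cos_of_nonneg_of_le_pi (by positivity) (by nlinarith [Real.pi_pos])
  nlinarith

lemma norm_one_div_mul_exp_cpow_le {C : ℝ} (hC : 0 < C) {w : ℂ} (hw : 0 ≤ w.re) {β : ℝ}
    (hβ0 : 0 ≤ β) (hβ2 : β ≤ 2) :
    ‖1 / ((C : ℂ) * exp (w ^ (β : ℂ)))‖ ≤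
      Real.exp (-(Real.cos (β * (Real.pi / 2)) * ‖w‖ ^ β)) / C := by
  have hre := cos_mul_pi_div_two_mul_rpow_le_re_cpow hw hβ0 hβ2
  simp only [norm_div, norm_one, norm_mul, norm_exp, norm_real, Real.norm_of_nonneg hC.le]
  calc 1 / (C * Real.exp (w ^ (β : ℂ)).re)
      ≤ 1 / (C * Real.exp (Real.cos (β * (Real.pi / 2)) * ‖w‖ ^ β)) := by gcongr
    _ = _ := by rw [Real.exp_neg]; field_simp

lemma one_add_I_mul_re (z : ℂ) : (1 + I * z).re = 1 - z.im := by
  simp [sub_eq_add_neg]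

lemma norm_le_two_mul_norm_one_add_I_mul {z : ℂ} (hz : z.im ≤ 0) :
    ‖z‖ ≤ 2 * ‖1 + I * z‖ := by
  have hw : 1 ≤ ‖1 + I * z‖ :=
    (by rw [one_add_I_mul_re]; linarith : (1 : ℝ) ≤ (1 + I * z).re).trans (re_le_norm _)
  calc ‖z‖ = ‖(1 + I * z) - 1‖ := by simp
    _ ≤ ‖1 + I * z‖ + 1 := by simpa using norm_sub_le (1 + I * z) 1
    _ ≤ 2 * ‖1 + I * z‖ := by linarith

/-- The improved LCHS kernel `f(z) = 1/(C_β exp((1+iz)^β))` is analytic on the open lower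
half plane and decays faster than any inverse power of `|z|` on the closed lower half plane. -/
theorem stmt6 (β : ℝ) (hβ0 : 0 < β) (hβ1 : β < 1) :
    let C : ℝ := 2 * Real.pi * Real.exp (-(2 : ℝ) ^ β)
    let f : ℂ → ℂ := fun z => 1 / ((C : ℂ) * Complex.exp ((1 + Complex.I * z) ^ (β : ℂ)))
    DifferentiableOn ℂ f {z : ℂ | z.im < 0} ∧
      ∀ α : ℝ, 0 < α → ∃ C' : ℝ, ∀ z : ℂ, z.im ≤ 0 → ‖z‖ ^ α * ‖f z‖ ≤ C' := by
  intro C f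
  have hC : 0 < C := by positivity
  refine ⟨fun z hz => ?_, fun α hα => ?_⟩
  · have hslit : 1 + I * z ∈ slitPlane :=
      Or.inl (by rw [one_add_I_mul_re]; linarith [show z.im < 0 from hz])
    refine DifferentiableAt.differentiableWithinAt ?_
    refine (differentiableAt_const 1).div ?_
      (mul_ne_zero (by exact_mod_cast hC.ne') (exp_ne_zero _))
    exact (differentiableAt_const _).mul
      (((differentiableAt_const 1).add (differentiableAt_id.const_mul I)).cpow_const hslit).cexp
  · set c := Real.cos (β * (Real.pi / 2))
    have hc : 0 < c :=
      Real.cos_pos_of_mem_Ioo ⟨by nlinarith [Real.pi_pos], by nlinarith [Real.pi_pos]⟩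
    set n := ⌈α / β⌉₊
    have hn : α ≤ β * n := by
      rw [← div_le_iff₀' hβ0]; exact Nat.le_ceil _
    refine ⟨2 ^ α * (n.factorial / c ^ n) / C, fun z hz => ?_⟩
    set w := 1 + I * z
    have hw : 1 ≤ w.re := by rw [one_add_I_mul_re]; linarith
    calc ‖z‖ ^ α * ‖f z‖ ≤ (2 * ‖w‖) ^ α * (Real.exp (-(c * ‖w‖ ^ β)) / C) := by
          gcongr
          · exact norm_le_two_mul_norm_one_add_I_mul hz
          · exact norm_one_div_mul_exp_cpow_le hC (by linarith) hβ0.le (by linarith)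
      _ = 2 ^ α * (‖w‖ ^ α * Real.exp (-(c * ‖w‖ ^ β))) / C := by
          rw [Real.mul_rpow (by norm_num) (norm_nonneg _)]; ring
      _ ≤ 2 ^ α * (n.factorial / c ^ n) / C := by
          gcongr
          exact rpow_mul_exp_neg_mul_rpow_le hc (hw.trans (re_le_norm w)) hn
end

section
/- Fix 0 < β < 1. For every integer p ≥ 0 and every real k, the p-th derivative of the function k ↦ exp(-(1+ik)^β) (principal branch) satisfies |(d/dk)^p exp(-(1+ik)^β)| ≤ (2p)!/p!. -/
/-!
Write `h = exp ∘ g` with `g k = -(1 + ik)^β`. Since `h' = h g'` and `‖h‖ ≤ 1` (the real part of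
`(1 + ik)^β` is nonnegative because `|β arg(1 + ik)| ≤ π/2`), the Leibniz rule and strong
induction give `‖h⁽ⁿ⁾‖ ≤ n!` as soon as `‖g⁽ⁱ⁺¹⁾‖ ≤ i!`. The latter holds because
`g⁽ⁱ⁺¹⁾(k) = -β(β-1)⋯(β-i) I^(i+1) (1 + ik)^(β-i-1)`, where the falling factorial is at most `i!`
in absolute value and the power has modulus at most `1`. Finally `n! ≤ (2n)!/n!`.
-/

open Complex Polynomial Nat
open scoped ContDiff

section

variable {𝕜 : Type*} [NontriviallyNormedField 𝕜]

theorem norm_iteratedDeriv_le_factorial_mul_of_deriv_eq_mul {A : Type*} [NormedRing A]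
    [NormedAlgebra 𝕜 A] {f u : 𝕜 → A}
    (hf : ContDiff 𝕜 ∞ f) (hu : ContDiff 𝕜 ∞ u) (hfu : deriv f = fun x => f x * u x)
    {M : ℝ} (hfM : ∀ x, ‖f x‖ ≤ M) (huM : ∀ i x, ‖iteratedDeriv i u x‖ ≤ i !) (n : ℕ) (x : 𝕜) :
    ‖iteratedDeriv n f x‖ ≤ n ! * M := by
  induction n using Nat.strong_induction_on generalizing x with
  | _ n ih =>
  cases n with
  | zero => simpa using hfM x
  | succ n =>
    have hM : 0 ≤ M := (norm_nonneg _).trans (hfM x)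
    have hterm : ∀ i ∈ Finset.range (n + 1), (n.choose i : ℝ) * ‖iteratedDeriv i f x‖ *
        ‖iteratedDeriv (n - i) u x‖ ≤ n ! * M := by
      intro i hi
      have hin : i ≤ n := Nat.lt_succ_iff.mp (Finset.mem_range.mp hi)
      calc (n.choose i : ℝ) * ‖iteratedDeriv i f x‖ * ‖iteratedDeriv (n - i) u x‖
          ≤ n.choose i * (i ! * M) * (n - i)! := by
            gcongr
            · exact ih i (by omega) x
            · exact huM _ x
        _ = n ! * M := by
            rw [← Nat.choose_mul_factorial_mul_factorial hin]
            push_cast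
            ring
    calc ‖iteratedDeriv (n + 1) f x‖
        = ‖iteratedFDeriv 𝕜 n (fun x => f x * u x) x‖ := by
          rw [iteratedDeriv_succ', hfu, norm_iteratedFDeriv_eq_norm_iteratedDeriv]
      _ ≤ ∑ i ∈ Finset.range (n + 1), (n.choose i : ℝ) * ‖iteratedDeriv i f x‖ *
            ‖iteratedDeriv (n - i) u x‖ := by
          simpa only [norm_iteratedFDeriv_eq_norm_iteratedDeriv] using
            norm_iteratedFDeriv_mul_le hf hu x (n := n) (mod_cast le_top)
      _ ≤ ∑ _i ∈ Finset.range (n + 1), (n ! * M : ℝ) := Finset.sum_le_sum hterm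
      _ = (n + 1)! * M := by
          rw [Finset.sum_const, Finset.card_range, Nat.factorial_succ]
          push_cast
          ring

theorem norm_iteratedDeriv_cexp_comp_le_factorial [NormedAlgebra 𝕜 ℂ] {g : 𝕜 → ℂ}
    (hg : ContDiff 𝕜 ∞ g)
    (hg_re : ∀ x, (g x).re ≤ 0) (hg_deriv : ∀ i x, ‖iteratedDeriv (i + 1) g x‖ ≤ i !)
    (n : ℕ) (x : 𝕜) :
    ‖iteratedDeriv n (fun x => exp (g x)) x‖ ≤ n ! := by
  obtain ⟨hg_diff, hg'⟩ := contDiff_infty_iff_deriv.mp hg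
  have hderiv : deriv (fun x => exp (g x)) = fun x => exp (g x) * deriv g x :=
    funext fun x => deriv_cexp (hg_diff x)
  have hexp_le : ∀ x, ‖exp (g x)‖ ≤ 1 := fun x => by
    rw [norm_exp, Real.exp_le_one_iff]
    exact hg_re x
  simpa using norm_iteratedDeriv_le_factorial_mul_of_deriv_eq_mul hg.cexp hg' hderiv hexp_le
    (fun i x => by simpa only [← iteratedDeriv_succ'] using hg_deriv i x) n x

end

theorem one_add_I_mul_ofReal_mem_slitPlane (k : ℝ) : 1 + I * k ∈ slitPlane :=
  Or.inl (by simp)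

theorem hasDerivAt_one_add_I_mul_cpow (c : ℂ) (k : ℝ) :
    HasDerivAt (fun k : ℝ => (1 + I * k) ^ c) (c * (1 + I * k) ^ (c - 1) * I) k := by
  have hlin : HasDerivAt (fun z : ℂ => 1 + I * z) I k := by
    simpa using ((hasDerivAt_id (k : ℂ)).const_mul I).const_add 1
  exact (hlin.cpow_const (one_add_I_mul_ofReal_mem_slitPlane k)).comp_ofReal

theorem iteratedDeriv_one_add_I_mul_cpow (c : ℂ) (n : ℕ) :
    iteratedDeriv n (fun k : ℝ => (1 + I * k) ^ c) =
      fun k : ℝ => (descPochhammer ℂ n).eval c * I ^ n * (1 + I * k) ^ (c - n) := by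
  induction n with
  | zero => simp
  | succ n ih =>
    ext k
    rw [iteratedDeriv_succ, ih]
    refine (((hasDerivAt_one_add_I_mul_cpow (c - n) k).const_mul _).deriv).trans ?_
    rw [descPochhammer_succ_right, eval_mul, eval_sub, eval_X, eval_natCast, sub_sub]
    push_cast
    ring

theorem contDiff_one_add_I_mul_cpow (c : ℂ) : ContDiff ℝ ∞ fun k : ℝ => (1 + I * k) ^ c :=
  contDiff_of_differentiable_iteratedDeriv fun n _ => by
    rw [iteratedDeriv_one_add_I_mul_cpow]
    exact fun k => ((hasDerivAt_one_add_I_mul_cpow _ k).differentiableAt).const_mul _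

theorem norm_one_add_I_mul_cpow_le_one (k : ℝ) {r : ℝ} (hr : r ≤ 0) :
    ‖(1 + I * k) ^ (r : ℂ)‖ ≤ 1 := by
  rw [norm_cpow_real]
  refine Real.rpow_le_one_of_one_le_of_nonpos ?_ hr
  simpa using abs_re_le_norm (1 + I * k)

theorem norm_descPochhammer_eval_succ_le_factorial {β : ℝ} (hβ0 : 0 ≤ β) (hβ1 : β ≤ 1) (n : ℕ) :
    ‖(descPochhammer ℂ (n + 1)).eval (β : ℂ)‖ ≤ n ! := by
  induction n with
  | zero => simpa [abs_of_nonneg hβ0] using hβ1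
  | succ n ih =>
    have hfactor : ‖(β : ℂ) - (n + 1 : ℕ)‖ ≤ n + 1 := by
      rw [← ofReal_natCast, ← ofReal_sub, norm_real, Real.norm_eq_abs, abs_sub_comm,
        abs_of_nonneg (by push_cast; linarith)]
      push_cast
      linarith
    rw [descPochhammer_succ_right, eval_mul, eval_sub, eval_X, eval_natCast, norm_mul,
      factorial_succ, cast_mul, mul_comm ((n + 1 : ℕ) : ℝ)]
    push_cast at hfactor ⊢
    gcongr

theorem norm_iteratedDeriv_succ_one_add_I_mul_cpow_le {β : ℝ} (hβ0 : 0 ≤ β) (hβ1 : β ≤ 1)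
    (n : ℕ) (k : ℝ) :
    ‖iteratedDeriv (n + 1) (fun k : ℝ => (1 + I * k) ^ (β : ℂ)) k‖ ≤ n ! := by
  have hexp : (β : ℂ) - (n + 1 : ℕ) = ((β - (n + 1) : ℝ) : ℂ) := by push_cast; ring
  rw [iteratedDeriv_one_add_I_mul_cpow, norm_mul, norm_mul, norm_pow, norm_I, one_pow, mul_one,
    hexp]
  calc _ ≤ (n ! : ℝ) * 1 := by
        gcongr
        · exact norm_descPochhammer_eval_succ_le_factorial hβ0 hβ1 n
        · exact norm_one_add_I_mul_cpow_le_one k (by linarith)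
    _ = n ! := mul_one _

theorem re_cpow_ofReal_nonneg {z : ℂ} (hz : 0 ≤ z.re) {β : ℝ} (hβ0 : 0 ≤ β) (hβ1 : β ≤ 1) :
    0 ≤ (z ^ (β : ℂ)).re := by
  rw [cpow_ofReal_re]
  refine mul_nonneg (by positivity) (Real.cos_nonneg_of_mem_Icc ?_)
  have harg : |arg z * β| ≤ Real.pi / 2 := by
    rw [abs_mul, abs_of_nonneg hβ0]
    exact (mul_le_of_le_one_right (abs_nonneg _) hβ1).trans (abs_arg_le_pi_div_two_iff.mpr hz)
  exact abs_le.mp harg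

theorem factorial_le_factorial_two_mul_div_factorial (p : ℕ) :
    (p ! : ℝ) ≤ (2 * p)! / p ! := by
  rw [le_div_iff₀ (by positivity), ← cast_mul, cast_le, two_mul]
  exact le_of_dvd (factorial_pos _) (factorial_mul_factorial_dvd_factorial_add p p)

/-- Derivative bound for `k ↦ exp(-(1+ik)^β)`: the `p`-th derivative is bounded by `(2p)!/p!`. -/
theorem stmt9 (β : ℝ) (hβ0 : 0 < β) (hβ1 : β < 1) (p : ℕ) (k : ℝ) :
    ‖iteratedDeriv p (fun k : ℝ => Complex.exp (-((1 + Complex.I * k) ^ (β : ℂ)))) k‖ ≤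
      (Nat.factorial (2 * p) : ℝ) / (Nat.factorial p : ℝ) := by
  have hg : ContDiff ℝ ∞ fun k : ℝ => -(1 + I * k) ^ (β : ℂ) :=
    (contDiff_one_add_I_mul_cpow _).neg
  refine (norm_iteratedDeriv_cexp_comp_le_factorial hg (fun k => ?_) (fun i k => ?_) p k).trans
    (factorial_le_factorial_two_mul_div_factorial p)
  · simpa using re_cpow_ofReal_nonneg (z := 1 + I * k) (by simp) hβ0.le hβ1.le
  · simpa using norm_iteratedDeriv_succ_one_add_I_mul_cpow_le hβ0.le hβ1.le i k
end

section
/- Let L and H be Hermitian N×N matrices and T > 0. Define U(k) = e^{-iT(kL+H)} for real k. Then for every integer q ≥ 1, the q-th derivative of U with respect to k satisfies ‖U^{(q)}(k)‖ ≤ (T·q·‖L‖)^q for all real k. -/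
open Complex NormedSpace

set_option maxHeartbeats 2000000
set_option synthInstance.maxHeartbeats 2000000

variable {N : ℕ}

local notation "Euc" N => EuclideanSpace ℂ (Fin N)

/-- If the real part of the numerical range of `W` is at most `c`, then `‖exp W‖ ≤ exp c`. -/
lemma exp_norm_le_of_re_inner_le (W : (Euc N) →L[ℂ] (Euc N)) (c : ℝ)
    (hW : ∀ u : Euc N, (inner ℂ (W u) u : ℂ).re ≤ c * ‖u‖ ^ 2) :
    ‖NormedSpace.exp W‖ ≤ Real.exp c := by
  refine ContinuousLinearMap.opNorm_le_bound _ (Real.exp_pos c).le fun v => ?_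
  have hnorm : ∀ x : Euc N, (inner ℂ x x : ℂ).re = ‖x‖ ^ 2 := fun x => by
    have := inner_self_eq_norm_sq (𝕜 := ℂ) x
    simpa only [RCLike.re_to_complex] using this
  set u : ℝ → Euc N := fun t => NormedSpace.exp (t • W) v with hu_def
  have hexpRC : True := trivial
  have hu : ∀ t : ℝ, HasDerivAt u (W (u t)) t := by
    intro t
    have h1 : HasDerivAt (fun s : ℝ => NormedSpace.exp (s • W))
        (W * NormedSpace.exp (t • W)) t := by
      have := hasDerivAt_exp_smul_const' (𝕂 := ℝ) W t
      simpa [hexpRC] using this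
    have h2 := ((ContinuousLinearMap.apply ℂ (Euc N) v).restrictScalars
        ℝ).hasFDerivAt.comp_hasDerivAt t h1
    simpa [Function.comp_def] using h2
  have hg : ∀ t : ℝ, HasDerivAt (fun t => (inner ℂ (u t) (u t) : ℂ).re)
      (2 * (inner ℂ (W (u t)) (u t) : ℂ).re) t := by
    intro t
    have h3 : HasDerivAt (fun t => (inner ℂ (u t) (u t) : ℂ))
        ((inner ℂ (u t) (W (u t)) : ℂ) + (inner ℂ (W (u t)) (u t) : ℂ)) t :=
      (hu t).inner ℂ (hu t)
    have h4 := (Complex.reCLM.restrictScalars ℝ).hasFDerivAt.comp_hasDerivAt t h3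
    have : ((inner ℂ (u t) (W (u t)) : ℂ) + (inner ℂ (W (u t)) (u t) : ℂ)).re
        = 2 * (inner ℂ (W (u t)) (u t) : ℂ).re := by
      rw [← inner_conj_symm (u t) (W (u t))]
      rw [Complex.add_re, Complex.conj_re]
      ring
    simpa only [Function.comp_def, ContinuousLinearMap.coe_restrictScalars', Complex.reCLM_apply, this] using h4
  set g : ℝ → ℝ := fun t => (inner ℂ (u t) (u t) : ℂ).re with hg_def
  have hgnn : ∀ t, 0 ≤ g t := fun t => by
    show 0 ≤ (inner ℂ (u t) (u t) : ℂ).re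
    rw [hnorm (u t)]; positivity
  have hgb : ∀ t, (2 * (inner ℂ (W (u t)) (u t) : ℂ).re) ≤ 2 * c * g t := by
    intro t
    have := hW (u t)
    have h6 : g t = ‖u t‖ ^ 2 := hnorm (u t)
    rw [h6]; nlinarith [hW (u t)]
  set φ : ℝ → ℝ := fun t => g t * Real.exp (-(2 * c) * t) with hφ_def
  have hφ : ∀ t : ℝ, HasDerivAt φ
      ((2 * (inner ℂ (W (u t)) (u t) : ℂ).re) * Real.exp (-(2 * c) * t)
        + g t * (-(2 * c) * Real.exp (-(2 * c) * t))) t := by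
    intro t
    have he : HasDerivAt (fun t : ℝ => Real.exp (-(2 * c) * t))
        (-(2 * c) * Real.exp (-(2 * c) * t)) t := by
      have := (Real.hasDerivAt_exp (-(2 * c) * t)).comp t
        ((hasDerivAt_id t).const_mul (-(2 * c)))
      simpa [Function.comp_def, mul_comm] using this
    exact (hg t).mul he
  have hmono : AntitoneOn φ (Set.Icc 0 1) := by
    apply antitoneOn_of_deriv_nonpos (convex_Icc 0 1)
    · exact fun t _ => ((hφ t).continuousAt).continuousWithinAt
    · exact fun t _ => ((hφ t).differentiableAt).differentiableWithinAt
    · intro t _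
      rw [(hφ t).deriv]
      have h7 := hgb t
      have h8 := Real.exp_pos (-(2 * c) * t)
      nlinarith [hgnn t]
  have h9 : φ 1 ≤ φ 0 := hmono (Set.left_mem_Icc.2 zero_le_one)
    (Set.right_mem_Icc.2 zero_le_one) zero_le_one
  have hu0 : u 0 = v := by
    show NormedSpace.exp ((0 : ℝ) • W) v = v
    have h0 : (0 : ℝ) • W = 0 := zero_smul ℝ W
    rw [h0, NormedSpace.exp_zero, ContinuousLinearMap.one_apply]
  have hu1 : u 1 = NormedSpace.exp W v := by
    show NormedSpace.exp ((1 : ℝ) • W) v = NormedSpace.exp W v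
    have h0 : (1 : ℝ) • W = W := one_smul ℝ W
    rw [h0]
  have h10 : ‖u 1‖ ^ 2 ≤ (Real.exp c * ‖v‖) ^ 2 := by
    have hφ1 : φ 1 = ‖u 1‖ ^ 2 * Real.exp (-(2 * c)) := by
      rw [hφ_def]; simp only [hg_def, hnorm, mul_one]
    have hφ0 : φ 0 = ‖v‖ ^ 2 := by
      rw [hφ_def]; simp only [hg_def, hnorm, hu0, mul_zero, Real.exp_zero, mul_one]
    rw [hφ1, hφ0] at h9
    have hinv : Real.exp (-(2 * c)) * (Real.exp c * Real.exp c) = 1 := by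
      rw [← Real.exp_add, ← Real.exp_add, show -(2 * c) + (c + c) = 0 by ring, Real.exp_zero]
    rw [mul_pow]
    nlinarith [h9, hinv, Real.exp_pos (-(2 * c)), Real.exp_pos c, sq_nonneg ‖u 1‖,
      sq_nonneg ‖v‖, mul_nonneg (Real.exp_pos c).le (Real.exp_pos c).le]
  have h11 : ‖u 1‖ ≤ Real.exp c * ‖v‖ := by
    have := Real.sqrt_le_sqrt h10
    rwa [Real.sqrt_sq (norm_nonneg _), Real.sqrt_sq (by positivity)] at this
  rwa [hu1] at h11

/-- Norm bound for `exp(-(iT')(zL+H))` in the complex strip. -/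
lemma norm_exp_le_strip (L H : (Euc N) →L[ℂ] (Euc N))
    (hL : IsSelfAdjoint L) (hH : IsSelfAdjoint H) (T' : ℝ) (z : ℂ) :
    ‖NormedSpace.exp ((-(Complex.I * (T' : ℂ))) • (z • L + H))‖ ≤
      Real.exp (|T'| * ‖L‖ * |z.im|) := by
  apply exp_norm_le_of_re_inner_le
  intro u
  have hreal : ∀ (S : (Euc N) →L[ℂ] (Euc N)), IsSelfAdjoint S →
      ((inner ℂ (S u) u : ℂ)).im = 0 := by
    intro S hS
    have hadj : ContinuousLinearMap.adjoint S = S := by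
      rwa [← ContinuousLinearMap.star_eq_adjoint]
    have hc : (starRingEnd ℂ) (inner ℂ (S u) u : ℂ) = (inner ℂ (S u) u : ℂ) := by
      rw [inner_conj_symm]
      conv_lhs => rw [← hadj]
      rw [ContinuousLinearMap.adjoint_inner_right]
    exact Complex.conj_eq_iff_im.mp hc
  set a : ℂ := inner ℂ (L u) u with ha_def
  set b : ℂ := inner ℂ (H u) u with hb_def
  have ha : a.im = 0 := hreal L hL
  have hb : b.im = 0 := hreal H hH
  have hWu : (((-(Complex.I * (T' : ℂ))) • (z • L + H)) u) =
      (-(Complex.I * (T' : ℂ))) • (z • (L u) + H u) := by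
    simp [ContinuousLinearMap.smul_apply, ContinuousLinearMap.add_apply]
  have hinner : (inner ℂ ((((-(Complex.I * (T' : ℂ))) • (z • L + H)) u)) u : ℂ) =
      (starRingEnd ℂ) (-(Complex.I * (T' : ℂ))) * ((starRingEnd ℂ) z * a + b) := by
    rw [hWu, inner_smul_left, inner_add_left, inner_smul_left]
  rw [hinner]
  have key : ((starRingEnd ℂ) (-(Complex.I * (T' : ℂ))) *
      ((starRingEnd ℂ) z * a + b)).re = T' * z.im * a.re := by
    simp only [map_neg, map_mul, Complex.conj_I, Complex.conj_ofReal,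
      Complex.mul_re, Complex.mul_im, Complex.neg_re, Complex.neg_im,
      Complex.add_re, Complex.add_im, Complex.I_re, Complex.I_im,
      Complex.ofReal_re, Complex.ofReal_im, Complex.conj_re, Complex.conj_im,
      ha, hb]
    ring
  rw [key]
  have haa : |a.re| ≤ ‖L‖ * ‖u‖ ^ 2 := by
    have h1 : |a.re| ≤ ‖a‖ := Complex.abs_re_le_norm a
    have h3 : ‖a‖ ≤ ‖L u‖ * ‖u‖ := norm_inner_le_norm _ _
    have h4 : ‖L u‖ ≤ ‖L‖ * ‖u‖ := L.le_opNorm u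
    have h2 : ‖a‖ = ‖a‖ := rfl
    nlinarith [norm_nonneg u]
  calc T' * z.im * a.re ≤ |T' * z.im * a.re| := le_abs_self _
    _ = |T'| * |z.im| * |a.re| := by rw [abs_mul, abs_mul]
    _ ≤ |T'| * |z.im| * (‖L‖ * ‖u‖ ^ 2) := by
        apply mul_le_mul_of_nonneg_left haa (by positivity)
    _ = |T'| * ‖L‖ * |z.im| * ‖u‖ ^ 2 := by ring

lemma iteratedDeriv_comp_ofReal {A : Type*} [NormedAddCommGroup A] [NormedSpace ℂ A]
    [CompleteSpace A] {G : ℂ → A} (hG : Differentiable ℂ G) (n : ℕ) (x : ℝ) :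
    iteratedDeriv n (fun y : ℝ => G y) x = iteratedDeriv n G x := by
  have hAn : ∀ m, Differentiable ℂ (iteratedDeriv m G) := by
    intro m
    induction m with
    | zero => simpa [iteratedDeriv_zero] using hG
    | succ m ih =>
      rw [iteratedDeriv_succ]
      exact analyticOnNhd_univ_iff_differentiable.mp
        ((analyticOnNhd_univ_iff_differentiable.mpr ih).deriv)
  induction n generalizing x with
  | zero => simp
  | succ m ih =>
    rw [iteratedDeriv_succ, iteratedDeriv_succ]
    have hfun : iteratedDeriv m (fun y : ℝ => G y) = fun y : ℝ => iteratedDeriv m G y :=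
      funext ih
    rw [hfun]
    have hd : HasDerivAt (iteratedDeriv m G) (deriv (iteratedDeriv m G) x) (x : ℂ) :=
      ((hAn m) (x : ℂ)).hasDerivAt
    have hof : HasDerivAt (fun y : ℝ => (y : ℂ)) ((1 : ℂ)) x := by
      simpa using (hasDerivAt_id x).ofReal_comp
    have hcomp : HasDerivAt (fun y : ℝ => iteratedDeriv m G y)
        (deriv (iteratedDeriv m G) (x : ℂ)) x := by
      simpa [Function.comp_def] using hd.scomp x hof
    rw [hcomp.deriv]

lemma factorial_mul_exp_pow_le (q : ℕ) (hq : 2 ≤ q) :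
    (q.factorial : ℝ) * Real.exp 1 ^ q ≤ (q : ℝ) ^ (2 * q) := by
  induction q, hq using Nat.le_induction with
  | base =>
    have he := Real.exp_one_lt_d9
    have hp := Real.exp_pos 1
    rw [show (2 : ℕ).factorial = 2 from rfl]
    push_cast
    nlinarith [he, hp]
  | succ n hn ih =>
    have h2 : (2 : ℝ) ≤ (n : ℝ) := by exact_mod_cast hn
    have he : Real.exp 1 ≤ (n : ℝ) + 1 := by
      have := Real.exp_one_lt_d9; nlinarith
    have hpow : ((n : ℝ)) ^ (2 * n) ≤ ((n : ℝ) + 1) ^ (2 * n) :=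
      pow_le_pow_left₀ (by positivity) (by linarith) _
    have hcast : ((n + 1 : ℕ) : ℝ) = (n : ℝ) + 1 := by push_cast; ring
    calc ((n + 1).factorial : ℝ) * Real.exp 1 ^ (n + 1)
        = ((n.factorial : ℝ) * Real.exp 1 ^ n) * (((n : ℝ) + 1) * Real.exp 1) := by
          push_cast [Nat.factorial_succ, pow_succ]; ring
      _ ≤ ((n : ℝ) ^ (2 * n)) * (((n : ℝ) + 1) * Real.exp 1) := by
          apply mul_le_mul_of_nonneg_right ih
          positivity
      _ ≤ (((n : ℝ) + 1) ^ (2 * n)) * (((n : ℝ) + 1) * ((n : ℝ) + 1)) := by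
          apply mul_le_mul hpow (mul_le_mul_of_nonneg_left he (by positivity))
            (by positivity) (by positivity)
      _ = (((n + 1 : ℕ)) : ℝ) ^ (2 * (n + 1)) := by
          rw [hcast, show 2 * (n + 1) = 2 * n + 2 by ring, pow_add]; ring
    

lemma lipschitz_exp_bound (L H : (Euc N) →L[ℂ] (Euc N))
    (hL : IsSelfAdjoint L) (hH : IsSelfAdjoint H) (T : ℝ) (k1 k2 : ℝ) :
    ‖NormedSpace.exp ((-(Complex.I * (T : ℂ))) • ((k1 : ℂ) • L + H)) -
      NormedSpace.exp ((-(Complex.I * (T : ℂ))) • ((k2 : ℂ) • L + H))‖ ≤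
      |T| * ‖L‖ * |k1 - k2| := by
  set X1 := (-(Complex.I * (T : ℂ))) • ((k1 : ℂ) • L + H) with hX1_def
  set X2 := (-(Complex.I * (T : ℂ))) • ((k2 : ℂ) • L + H) with hX2_def
  have hexpRC : True := trivial
  -- norm-1 bounds
  have hsm : ∀ (s : ℝ) (kk : ℝ),
      s • ((-(Complex.I * (T : ℂ))) • ((kk : ℂ) • L + H)) =
        (-(Complex.I * ((s * T : ℝ) : ℂ))) • ((kk : ℂ) • L + H) := by
    intro s kk
    rw [← smul_assoc]
    congr 1
    rw [Complex.real_smul]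
    push_cast
    ring
  have hnorm1 : ∀ (s : ℝ) (kk : ℝ),
      ‖NormedSpace.exp (s • ((-(Complex.I * (T : ℂ))) • ((kk : ℂ) • L + H)))‖ ≤ 1 := by
    intro s kk
    rw [hsm s kk]
    have := norm_exp_le_strip L H hL hH (s * T) ((kk : ℝ) : ℂ)
    simpa using this
  have He1 : ∀ t : ℝ, HasDerivAt (fun t : ℝ => NormedSpace.exp (t • X1))
      (X1 * NormedSpace.exp (t • X1)) t := by
    intro t
    have := hasDerivAt_exp_smul_const' (𝕂 := ℝ) X1 t
    simpa [hexpRC] using this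
  have He2 : ∀ t : ℝ, HasDerivAt (fun t : ℝ => NormedSpace.exp ((1 - t) • X2))
      (-(X2 * NormedSpace.exp ((1 - t) • X2))) t := by
    intro t
    have hbase : HasDerivAt (fun s : ℝ => NormedSpace.exp (s • X2))
        (X2 * NormedSpace.exp ((1 - t) • X2)) (1 - t) := by
      have := hasDerivAt_exp_smul_const' (𝕂 := ℝ) X2 (1 - t)
      simpa [hexpRC] using this
    have hs : HasDerivAt (fun t : ℝ => 1 - t) (-1) t := by
      simpa using (hasDerivAt_id t).const_sub 1
    have := hbase.scomp t hs
    simpa [Function.comp_def] using this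
  set h : ℝ → ((Euc N) →L[ℂ] (Euc N)) :=
    fun t => NormedSpace.exp (t • X1) * NormedSpace.exp ((1 - t) • X2) with hh_def
  have Hprod : ∀ t : ℝ, HasDerivAt h
      (NormedSpace.exp (t • X1) * (X1 - X2) * NormedSpace.exp ((1 - t) • X2)) t := by
    intro t
    have := (He1 t).mul (He2 t)
    have hcomm : X1 * NormedSpace.exp (t • X1) = NormedSpace.exp (t • X1) * X1 := by
      have a1 := hasDerivAt_exp_smul_const' (𝕂 := ℝ) X1 t
      have a2 := hasDerivAt_exp_smul_const (𝕂 := ℝ) X1 t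
      have := a1.unique a2
      simpa [hexpRC] using this
    have heq : X1 * NormedSpace.exp (t • X1) * NormedSpace.exp ((1 - t) • X2) +
        NormedSpace.exp (t • X1) * -(X2 * NormedSpace.exp ((1 - t) • X2)) =
        NormedSpace.exp (t • X1) * (X1 - X2) * NormedSpace.exp ((1 - t) • X2) := by
      rw [hcomm]
      noncomm_ring
    rw [← heq]
    exact this
  have hX : X1 - X2 = ((-(Complex.I * (T : ℂ))) * ((k1 : ℂ) - (k2 : ℂ))) • L := by
    rw [hX1_def, hX2_def]
    module
  have hXnorm : ‖X1 - X2‖ = |T| * ‖L‖ * |k1 - k2| := by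
    rw [hX, norm_smul (-(Complex.I * (T : ℂ)) * ((k1 : ℂ) - (k2 : ℂ))) L]
    rw [show ((k1 : ℂ) - (k2 : ℂ)) = ((k1 - k2 : ℝ) : ℂ) by push_cast; ring]
    simp [norm_mul, Complex.norm_real]
    rw [show ((k1 : ℂ) - (k2 : ℂ)) = ((k1 - k2 : ℝ) : ℂ) by push_cast; ring,
      Complex.norm_real, Real.norm_eq_abs]
    ring
  have hmv := norm_image_sub_le_of_norm_deriv_le_segment_01'
    (f := h) (f' := fun t => NormedSpace.exp (t • X1) * (X1 - X2) *
      NormedSpace.exp ((1 - t) • X2)) (C := |T| * ‖L‖ * |k1 - k2|)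
    (fun t _ => (Hprod t).hasDerivWithinAt)
    (fun t _ => by
      calc ‖NormedSpace.exp (t • X1) * (X1 - X2) * NormedSpace.exp ((1 - t) • X2)‖
          ≤ ‖NormedSpace.exp (t • X1) * (X1 - X2)‖ * ‖NormedSpace.exp ((1 - t) • X2)‖ :=
            norm_mul_le _ _
        _ ≤ (‖NormedSpace.exp (t • X1)‖ * ‖X1 - X2‖) * ‖NormedSpace.exp ((1 - t) • X2)‖ :=
            mul_le_mul_of_nonneg_right (norm_mul_le _ _) (norm_nonneg _)
        _ ≤ ‖NormedSpace.exp (t • X1)‖ * ‖X1 - X2‖ := by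
            have h2 : ‖NormedSpace.exp ((1 - t) • X2)‖ ≤ 1 := by
              rw [hX2_def]; exact hnorm1 (1 - t) k2
            exact mul_le_of_le_one_right (by positivity) h2
        _ ≤ 1 * ‖X1 - X2‖ := by
            have h1 : ‖NormedSpace.exp (t • X1)‖ ≤ 1 := by
              rw [hX1_def]; exact hnorm1 t k1
            exact mul_le_mul_of_nonneg_right h1 (norm_nonneg _)
        _ = |T| * ‖L‖ * |k1 - k2| := by rw [one_mul, hXnorm])
  have hh1 : h 1 = NormedSpace.exp X1 := by
    show NormedSpace.exp ((1:ℝ) • X1) * NormedSpace.exp ((1 - 1 : ℝ) • X2) = _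
    have e1 : (1:ℝ) • X1 = X1 := one_smul ℝ X1
    have e2 : ((1 - 1 : ℝ)) • X2 = 0 := by
      rw [show (1 - 1 : ℝ) = 0 by norm_num]; exact zero_smul ℝ X2
    rw [e1, e2, NormedSpace.exp_zero, mul_one]
  have hh0 : h 0 = NormedSpace.exp X2 := by
    show NormedSpace.exp ((0:ℝ) • X1) * NormedSpace.exp ((1 - 0 : ℝ) • X2) = _
    have e1 : (0:ℝ) • X1 = 0 := zero_smul ℝ X1
    have e2 : ((1 - 0 : ℝ)) • X2 = X2 := by
      rw [show (1 - 0 : ℝ) = 1 by norm_num]; exact one_smul ℝ X2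
    rw [e1, e2, NormedSpace.exp_zero, one_mul]
  rw [hh1, hh0] at hmv
  exact hmv

lemma iteratedDeriv_const_of_pos {A : Type*} [NormedAddCommGroup A] [NormedSpace ℂ A]
    {n : ℕ} (hn : 1 ≤ n) (c : A) (z : ℂ) :
    iteratedDeriv n (fun _ : ℂ => c) z = 0 := by
  have hzero : ∀ (m : ℕ) (w : ℂ), iteratedDeriv m (fun _ : ℂ => (0 : A)) w = 0 := by
    intro m
    induction m with
    | zero => intro w; simp [iteratedDeriv_zero]
    | succ m ih =>
      intro w
      rw [iteratedDeriv_succ', deriv_const']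
      exact ih w
  obtain ⟨m, rfl⟩ : ∃ m, n = m + 1 := ⟨n - 1, by omega⟩
  rw [iteratedDeriv_succ', deriv_const']
  exact hzero m z

/-- Derivative bound in `k` for the unitary `U(k) = e^{-iT(kL+H)}`:
`‖U^{(q)}(k)‖ ≤ (T q ‖L‖)^q`. -/
theorem stmt11 (N : ℕ)
    (L H : EuclideanSpace ℂ (Fin N) →L[ℂ] EuclideanSpace ℂ (Fin N))
    (hL : IsSelfAdjoint L) (hH : IsSelfAdjoint H)
    (T : ℝ) (hT : 0 < T) (q : ℕ) (hq : 1 ≤ q) (k : ℝ) :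
    ‖iteratedDeriv q
        (fun k : ℝ => NormedSpace.exp ((-(Complex.I * T)) • ((k : ℂ) • L + H))) k‖ ≤
      (T * q * ‖L‖) ^ q := by
  set G : ℂ → (EuclideanSpace ℂ (Fin N) →L[ℂ] EuclideanSpace ℂ (Fin N)) :=
    fun z => NormedSpace.exp ((-(Complex.I * (T : ℂ))) • (z • L + H)) with hG_def
  have hGdiff : Differentiable ℂ G := by
    intro z
    have h1 : DifferentiableAt ℂ (fun z : ℂ => (-(Complex.I * (T : ℂ))) • (z • L + H)) z :=
      by fun_prop
    exact ((NormedSpace.exp_analytic (𝕂 := ℂ) _).differentiableAt).comp z h1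
  have htrans : iteratedDeriv q
      (fun k : ℝ => NormedSpace.exp ((-(Complex.I * T)) • ((k : ℂ) • L + H))) k =
      iteratedDeriv q G (k : ℂ) := by
    have heq : (fun k : ℝ => NormedSpace.exp ((-(Complex.I * T)) • ((k : ℂ) • L + H))) =
        (fun y : ℝ => G (y : ℂ)) := rfl
    rw [heq]
    exact iteratedDeriv_comp_ofReal hGdiff q k
  rw [htrans]
  rcases eq_or_lt_of_le hq with hq1 | hq2
  · -- q = 1 : Lipschitz argument
    subst hq1
    rw [iteratedDeriv_one]
    have hof : HasDerivAt (fun y : ℝ => (y : ℂ)) 1 k := by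
      simpa using (hasDerivAt_id k).ofReal_comp
    have hdG : HasDerivAt (fun y : ℝ => G (y : ℂ)) (deriv G (k : ℂ)) k := by
      simpa [Function.comp_def] using ((hGdiff (k : ℂ)).hasDerivAt).scomp k hof
    have hF : HasFDerivAt (fun y : ℝ => G (y : ℂ))
        (ContinuousLinearMap.smulRight (1 : ℝ →L[ℝ] ℝ) (deriv G (k : ℂ))) k := hdG
    have hlip : ∀ᶠ x in nhds k, ‖(fun y : ℝ => G (y : ℂ)) x - (fun y : ℝ => G (y : ℂ)) k‖ ≤
        (T * ‖L‖) * ‖x - k‖ := by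
      refine Filter.Eventually.of_forall fun x => ?_
      have hlb := lipschitz_exp_bound L H hL hH T x k
      rw [abs_of_pos hT] at hlb
      calc ‖(fun y : ℝ => G (y : ℂ)) x - (fun y : ℝ => G (y : ℂ)) k‖
          ≤ T * ‖L‖ * |x - k| := hlb
        _ = (T * ‖L‖) * ‖x - k‖ := by rw [Real.norm_eq_abs]
    have hb := hF.le_of_lip' (by positivity) hlip
    rw [ContinuousLinearMap.norm_smulRight_apply, norm_one, one_mul] at hb
    calc ‖deriv G (k : ℂ)‖ ≤ T * ‖L‖ := hb
      _ = (T * (1 : ℕ) * ‖L‖) ^ 1 := by norm_num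
  · -- 2 ≤ q : Cauchy estimates
    have hq2' : 2 ≤ q := hq2
    have hqne : (q : ℝ) ≠ 0 := by positivity
    by_cases hL0 : ‖L‖ = 0
    · have hLz : L = 0 := norm_eq_zero.mp hL0
      subst hLz
      have hGc : G = fun _ => NormedSpace.exp ((-(Complex.I * (T : ℂ))) • H) := by
        funext z
        show NormedSpace.exp ((-(Complex.I * (T : ℂ))) •
          (z • (0 : EuclideanSpace ℂ (Fin N) →L[ℂ] EuclideanSpace ℂ (Fin N)) + H)) =
          NormedSpace.exp ((-(Complex.I * (T : ℂ))) • H)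
        congr 1
        module
      rw [hGc, iteratedDeriv_const_of_pos hq]
      simp [zero_pow (show q ≠ 0 by omega)]
    · have hLpos : 0 < ‖L‖ := lt_of_le_of_ne (norm_nonneg L) (Ne.symm hL0)
      set τ : ℝ := T * ‖L‖ with hτ_def
      have hτpos : 0 < τ := by positivity
      set r : ℝ := q / τ with hr_def
      have hrpos : 0 < r := by positivity
      set R : NNReal := ⟨r, hrpos.le⟩ with hR_def
      have hRr : ((R : ℝ)) = r := rfl
      have hRpos : 0 < R := by
        rw [← NNReal.coe_lt_coe, hRr]
        exact hrpos
      have hball := hGdiff.hasFPowerSeriesOnBall (k : ℂ) hRpos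
      have hfd : iteratedDeriv q G (k : ℂ) =
          q.factorial • ((cauchyPowerSeries G (k : ℂ) R q) fun _ => (1 : ℂ)) := by
        rw [iteratedDeriv_eq_iteratedFDeriv, ← hball.factorial_smul (1 : ℂ) q]
      rw [hfd]
      -- bound on the circle
      have hC : ∀ θ : ℝ, ‖G (circleMap (k : ℂ) R θ)‖ ≤ Real.exp q := by
        intro θ
        have hs := norm_exp_le_strip L H hL hH T (circleMap (k : ℂ) R θ)
        rw [abs_of_pos hT] at hs
        refine hs.trans (Real.exp_le_exp.mpr ?_)
        have him : (circleMap (k : ℂ) R θ).im = r * Real.sin θ := by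
          simp [circleMap, hRr]
        rw [him]
        have h1 : |r * Real.sin θ| ≤ r := by
          rw [abs_mul, abs_of_pos hrpos]
          have hs1 : |Real.sin θ| ≤ 1 := abs_le.mpr ⟨Real.neg_one_le_sin θ, Real.sin_le_one θ⟩
          nlinarith [abs_nonneg (Real.sin θ), hrpos]
        calc T * ‖L‖ * |r * Real.sin θ| ≤ T * ‖L‖ * r := by
              apply mul_le_mul_of_nonneg_left h1 (by positivity)
          _ = (q : ℝ) := by rw [← hτ_def, hr_def]; field_simp
      -- integral bound
      have hcont : Continuous fun θ : ℝ => ‖G (circleMap (k : ℂ) R θ)‖ :=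
        (hGdiff.continuous.comp (continuous_circleMap _ _)).norm
      have hint : (2 * Real.pi)⁻¹ *
          ∫ θ : ℝ in (0)..2 * Real.pi, ‖G (circleMap (k : ℂ) R θ)‖ ≤ Real.exp q := by
        have hmono := intervalIntegral.integral_mono_on (μ := MeasureTheory.volume)
          (by positivity : (0:ℝ) ≤ 2 * Real.pi)
          (hcont.intervalIntegrable 0 (2 * Real.pi))
          (intervalIntegrable_const)
          (fun θ _ => hC θ)
        rw [intervalIntegral.integral_const, smul_eq_mul] at hmono
        have hπ := Real.two_pi_pos
        calc (2 * Real.pi)⁻¹ * ∫ θ : ℝ in (0)..2 * Real.pi, ‖G (circleMap (k : ℂ) R θ)‖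
            ≤ (2 * Real.pi)⁻¹ * ((2 * Real.pi - 0) * Real.exp q) := by
              apply mul_le_mul_of_nonneg_left hmono (by positivity)
          _ = Real.exp q := by rw [sub_zero]; field_simp
      have hps := norm_cauchyPowerSeries_le G (k : ℂ) R q
      have hpq : ‖cauchyPowerSeries G (k : ℂ) R q‖ ≤ Real.exp q * r⁻¹ ^ q := by
        refine hps.trans ?_
        rw [hRr, abs_of_pos hrpos]
        exact mul_le_mul_of_nonneg_right hint (by positivity)
      have hv : ‖(cauchyPowerSeries G (k : ℂ) R q) fun _ => (1 : ℂ)‖ ≤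
          ‖cauchyPowerSeries G (k : ℂ) R q‖ := by
        have h := (cauchyPowerSeries G (k : ℂ) R q).le_opNorm fun _ => (1 : ℂ)
        simp only [norm_one, Finset.prod_const_one, mul_one] at h
        exact h
      calc ‖q.factorial • ((cauchyPowerSeries G (k : ℂ) R q) fun _ => (1 : ℂ))‖
          = (q.factorial : ℝ) * ‖(cauchyPowerSeries G (k : ℂ) R q) fun _ => (1 : ℂ)‖ := by
            rw [← Nat.cast_smul_eq_nsmul ℝ, norm_smul, Real.norm_natCast]
        _ ≤ (q.factorial : ℝ) * (Real.exp q * r⁻¹ ^ q) := by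
            apply mul_le_mul_of_nonneg_left (hv.trans hpq) (by positivity)
        _ ≤ (T * q * ‖L‖) ^ q := by
            have h1 : r⁻¹ = τ / q := by
              rw [hr_def]
              field_simp
            rw [h1, ← Real.exp_one_pow]
            have h2 := factorial_mul_exp_pow_le q hq2'
            calc (q.factorial : ℝ) * (Real.exp 1 ^ q * (τ / q) ^ q)
                = ((q.factorial : ℝ) * Real.exp 1 ^ q) * (τ / q) ^ q := by ring
              _ ≤ (q : ℝ) ^ (2 * q) * (τ / q) ^ q := by
                  apply mul_le_mul_of_nonneg_right h2 (by positivity)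
              _ = ((q : ℝ) ^ 2 * (τ / q)) ^ q := by rw [pow_mul, ← mul_pow]
              _ = ((q : ℝ) * τ) ^ q := by
                  congr 1
                  field_simp
              _ = (T * q * ‖L‖) ^ q := by
                  rw [hτ_def]
                  congr 1
                  ring
end

section
/- Let L and H be time-independent Hermitian N×N matrices with L positive semi-definite, let λ₀ > 0 satisfy L ⪰ λ₀·I, and let t > 0. Let f satisfy the analyticity condition (analytic on the open lower half plane, continuous up to ℝ) and the decay condition |z|^α·|f(z)| ≤ C̃ on {Im z ≤ 0} for some α > 1. Then ∫_ℝ f(k)·e^{-it(kL+H)} dk = 0. -/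
open Complex MeasureTheory NormedSpace

-- Contraction lemma: if Re⟪v, Mv⟫ ≤ 0 for all v then ‖exp M‖ ≤ 1.
theorem exp_contraction_aux {E : Type*} [NormedAddCommGroup E] [InnerProductSpace ℂ E]
    [CompleteSpace E] (M : E →L[ℂ] E) (hM : ∀ v : E, (inner ℂ v (M v) : ℂ).re ≤ 0) :
    ‖NormedSpace.exp M‖ ≤ 1 := by
  refine ContinuousLinearMap.opNorm_le_bound _ zero_le_one fun v => ?_
  rw [one_mul]
  set u : ℝ → E := fun s => NormedSpace.exp (s • M) v with hu_def
  have hu : ∀ s : ℝ, HasDerivAt u (M (u s)) s := by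
    intro s
    have h1 : HasDerivAt (fun s : ℝ => NormedSpace.exp (s • M)) (M * NormedSpace.exp (s • M)) s :=
      hasDerivAt_exp_smul_const' (𝕂 := ℝ) M s
    have h2 := ((ContinuousLinearMap.apply ℂ E v).restrictScalars ℝ).hasFDerivAt.comp_hasDerivAt s h1
    exact h2
  set ψ : ℝ → ℝ := fun s => (inner ℂ (u s) (u s) : ℂ).re with hψ_def
  have hψ : ∀ s : ℝ, HasDerivAt ψ
      ((inner ℂ (u s) (M (u s)) + inner ℂ (M (u s)) (u s) : ℂ).re) s := by
    intro s
    have h3 : HasDerivAt (fun s => (inner ℂ (u s) (u s) : ℂ))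
        (inner ℂ (u s) (M (u s)) + inner ℂ (M (u s)) (u s)) s :=
      (hu s).inner ℂ (hu s)
    exact Complex.reCLM.hasFDerivAt.comp_hasDerivAt s h3
  have hd : ∀ s : ℝ, deriv ψ s ≤ 0 := by
    intro s
    rw [(hψ s).deriv]
    have h4 : (inner ℂ (M (u s)) (u s) : ℂ).re = (inner ℂ (u s) (M (u s)) : ℂ).re := by
      rw [← inner_conj_symm (M (u s)) (u s)]
      exact Complex.conj_re _
    rw [Complex.add_re, h4]
    linarith [hM (u s)]
  have hanti : Antitone ψ :=
    antitone_of_deriv_nonpos (fun s => (hψ s).differentiableAt) hd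
  have h01 : ψ 1 ≤ ψ 0 := hanti zero_le_one
  have hψn : ∀ s, ψ s = ‖u s‖ ^ 2 := by
    intro s
    show (inner ℂ (u s) (u s) : ℂ).re = ‖u s‖ ^ 2
    rw [@inner_self_eq_norm_sq_to_K ℂ]
    simp [← Complex.ofReal_pow]
  rw [hψn 1, hψn 0] at h01
  have hu0 : u 0 = v := by simp [hu_def]
  have hu1 : u 1 = NormedSpace.exp M v := by
    rw [hu_def]
    simp only [one_smul]
  rw [hu0, hu1] at h01
  exact (pow_le_pow_iff_left₀ (norm_nonneg _) (norm_nonneg _) two_ne_zero).mp h01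

set_option maxHeartbeats 1600000 in
set_option synthInstance.maxHeartbeats 400000 in
/-- Key vanishing lemma, time-independent case: for Hermitian `L ⪰ λ₀ I > 0` and
Hermitian `H`, and kernel `f` satisfying the analyticity and decay (α > 1) conditions,
`∫ f(k) e^{-it(kL+H)} dk = 0`. -/
theorem stmt17 (N : ℕ)
    (L H : EuclideanSpace ℂ (Fin N) →L[ℂ] EuclideanSpace ℂ (Fin N))
    (hLsa : IsSelfAdjoint L) (hHsa : IsSelfAdjoint H)
    (lam : ℝ) (hlam : 0 < lam)
    (hLlb : ∀ x : EuclideanSpace ℂ (Fin N), lam * ‖x‖ ^ 2 ≤ (inner ℂ x (L x) : ℂ).re)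
    (t : ℝ) (ht : 0 < t)
    (f : ℂ → ℂ) (α Ctil : ℝ) (hα : 1 < α)
    (hcont : ContinuousOn f {z : ℂ | z.im ≤ 0})
    (hdiff : DifferentiableOn ℂ f {z : ℂ | z.im < 0})
    (hdecay : ∀ z : ℂ, z.im ≤ 0 → ‖z‖ ^ α * ‖f z‖ ≤ Ctil) :
    ∫ k : ℝ, f (k : ℂ) • NormedSpace.exp ((-(Complex.I * t)) • ((k : ℂ) • L + H)) = 0 := by
  set F : ℂ → (EuclideanSpace ℂ (Fin N) →L[ℂ] EuclideanSpace ℂ (Fin N)) := fun z => NormedSpace.exp ((-(Complex.I * t)) • (z • L + H)) with hF_def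
  set g : ℂ → (EuclideanSpace ℂ (Fin N) →L[ℂ] EuclideanSpace ℂ (Fin N)) := fun z => f z • F z with hg_def
  -- self-adjointness: inner ℂ products are real
  have hreal : ∀ (T : EuclideanSpace ℂ (Fin N) →L[ℂ] EuclideanSpace ℂ (Fin N)), IsSelfAdjoint T → ∀ v : EuclideanSpace ℂ (Fin N), (inner ℂ v (T v) : ℂ).im = 0 := by
    intro T hT v
    have hsym := hT.isSymmetric
    have h1 : (starRingEnd ℂ) (inner ℂ v (T v) : ℂ) = (inner ℂ v (T v) : ℂ) := by
      rw [inner_conj_symm]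
      exact hsym v v
    exact Complex.conj_eq_iff_im.mp h1
  -- dissipativity in the closed lower half plane
  have hdiss : ∀ z : ℂ, z.im ≤ 0 → ∀ v : EuclideanSpace ℂ (Fin N),
      (inner ℂ v (((-(Complex.I * t)) • (z • L + H)) v) : ℂ).re ≤ 0 := by
    intro z hz v
    have hLim := hreal L hLsa v
    have hHim := hreal H hHsa v
    have hLre : 0 ≤ (inner ℂ v (L v) : ℂ).re := le_trans (by positivity) (hLlb v)
    have expand : (inner ℂ v (((-(Complex.I * t)) • (z • L + H)) v) : ℂ)
        = (-(Complex.I * t)) * (z * (inner ℂ v (L v) : ℂ) + (inner ℂ v (H v) : ℂ)) := by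
      simp only [ContinuousLinearMap.smul_apply, ContinuousLinearMap.add_apply,
        ContinuousLinearMap.smul_apply, inner_smul_right, inner_add_right]
    rw [expand]
    set a : ℂ := (inner ℂ v (L v) : ℂ) with ha
    set b : ℂ := (inner ℂ v (H v) : ℂ)
    have : ((-(Complex.I * t)) * (z * a + b)).re = t * (z.im * a.re) := by
      have hti : (t : ℂ).im = 0 := Complex.ofReal_im t
      have htr : (t : ℂ).re = t := Complex.ofReal_re t
      simp [Complex.mul_re, Complex.mul_im, Complex.add_re, Complex.add_im, hti, htr,
        hLim, hHim]
    rw [this]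
    have : z.im * a.re ≤ 0 := mul_nonpos_of_nonpos_of_nonneg hz hLre
    nlinarith
  -- norm bound on F in the closed lower half plane
  have hFle : ∀ z : ℂ, z.im ≤ 0 → ‖F z‖ ≤ 1 := fun z hz =>
    exp_contraction_aux _ (hdiss z hz)
  -- F is entire
  have hFdiff : Differentiable ℂ F := by
    intro z
    exact (NormedSpace.exp_analytic _).differentiableAt.comp z
      (((differentiableAt_id.smul_const L).add_const H).const_smul (-(Complex.I * t)))
  have hFc : Continuous F := hFdiff.continuous
  -- norm bound on g
  have hgle : ∀ z : ℂ, z.im ≤ 0 → ‖g z‖ ≤ ‖f z‖ := by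
    intro z hz
    rw [hg_def]
    calc ‖f z • F z‖ = ‖f z‖ * ‖F z‖ := norm_smul (f z) (F z)
      _ ≤ ‖f z‖ * 1 := by
          exact mul_le_mul_of_nonneg_left (hFle z hz) (norm_nonneg _)
      _ = ‖f z‖ := mul_one _
  -- decay bound on f
  have hf_decay : ∀ (r : ℝ) (p : ℂ), 0 < r → p.im ≤ 0 → r ≤ ‖p‖ → ‖f p‖ ≤ Ctil * r ^ (-α) := by
    intro r p hr hp hrp
    have h1 : r ^ α * ‖f p‖ ≤ Ctil := by
      refine le_trans ?_ (hdecay p hp)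
      have : r ^ α ≤ ‖p‖ ^ α := Real.rpow_le_rpow hr.le hrp (by linarith)
      exact mul_le_mul_of_nonneg_right this (norm_nonneg _)
    have hpos : (0:ℝ) < r ^ α := Real.rpow_pos_of_pos hr α
    rw [Real.rpow_neg hr.le]
    rw [mul_comm] at h1
    calc ‖f p‖ = ‖f p‖ * r ^ α * (r ^ α)⁻¹ := by field_simp
      _ ≤ Ctil * (r ^ α)⁻¹ := mul_le_mul_of_nonneg_right h1 (inv_nonneg.mpr hpos.le)
  -- continuity of g on the closed lower half plane
  have hgcont : ContinuousOn g {z : ℂ | z.im ≤ 0} := hcont.smul hFc.continuousOn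
  -- g restricted to ℝ is continuous
  have hgR : Continuous fun x : ℝ => g (x : ℂ) := by
    have h1 : ContinuousOn (fun x : ℝ => g (x : ℂ)) Set.univ :=
      hgcont.comp Complex.continuous_ofReal.continuousOn
        (fun x _ => by simp [Set.mem_setOf_eq])
    exact continuousOn_univ.mp h1
  -- integrability of the majorant
  have habs : IntegrableOn (fun x : ℝ => |x| ^ (-α)) (Set.Ioi (1:ℝ)) := by
    refine (integrableOn_Ioi_rpow_of_lt (show -α < (-1:ℝ) by linarith) one_pos).congr_fun ?_ measurableSet_Ioi
    intro x hx
    have h1 : |x| = x := _root_.abs_of_pos (lt_trans one_pos hx)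
    simp [h1]
  have habs' : IntegrableOn (fun x : ℝ => |x| ^ (-α)) (Set.Iio (-1:ℝ)) := by
    have h2 := (MeasurePreserving.integrableOn_comp_preimage
      (Measure.measurePreserving_neg (volume : Measure ℝ))
      (Homeomorph.neg ℝ).measurableEmbedding).2 habs
    have hset : (Neg.neg ⁻¹' Set.Ioi (1:ℝ)) = Set.Iio (-1) := by
      ext x; simp [lt_neg]
    have hfun : ((fun x : ℝ => |x| ^ (-α)) ∘ Neg.neg) = fun x : ℝ => |x| ^ (-α) := by
      funext x; simp [abs_neg]
    rw [hset, hfun] at h2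
    exact h2
  -- integrability of g on ℝ
  have hbound : ∀ x : ℝ, 1 ≤ |x| → ‖g (x : ℂ)‖ ≤ Ctil * |x| ^ (-α) := by
    intro x hx
    have him : ((x : ℂ)).im ≤ 0 := by simp
    have hnorm : |x| ≤ ‖(x : ℂ)‖ := le_of_eq (Complex.norm_real x).symm
    refine le_trans (hgle _ him) (hf_decay |x| _ (by linarith) him hnorm)
  have hIntg : Integrable (fun x : ℝ => g (x : ℂ)) := by
    refine (hgR.locallyIntegrable).integrable_of_isBigO_atBot_atTop
      (g := fun x : ℝ => |x| ^ (-α)) (g' := fun x : ℝ => |x| ^ (-α)) ?_ ?_ ?_ ?_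
    · rw [Asymptotics.isBigO_iff]
      refine ⟨Ctil, ?_⟩
      filter_upwards [Filter.eventually_le_atBot (-1 : ℝ)] with x hx
      have h1 : (1:ℝ) ≤ |x| := by rw [_root_.abs_of_nonpos (by linarith)]; linarith
      calc ‖g (x:ℂ)‖ ≤ Ctil * |x| ^ (-α) := hbound x h1
        _ ≤ Ctil * ‖|x| ^ (-α)‖ := by
            rw [Real.norm_eq_abs, _root_.abs_of_nonneg (Real.rpow_nonneg (abs_nonneg x) _)]
    · exact ⟨Set.Iio (-1), Filter.Iio_mem_atBot (-1), habs'⟩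
    · rw [Asymptotics.isBigO_iff]
      refine ⟨Ctil, ?_⟩
      filter_upwards [Filter.eventually_ge_atTop (1 : ℝ)] with x hx
      have h1 : (1:ℝ) ≤ |x| := by rw [_root_.abs_of_nonneg (by linarith)]; linarith
      calc ‖g (x:ℂ)‖ ≤ Ctil * |x| ^ (-α) := hbound x h1
        _ ≤ Ctil * ‖|x| ^ (-α)‖ := by
            rw [Real.norm_eq_abs, _root_.abs_of_nonneg (Real.rpow_nonneg (abs_nonneg x) _)]
    · exact ⟨Set.Ioi 1, Filter.Ioi_mem_atTop 1, habs⟩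
  -- rectangle estimate
  have hrect : ∀ R : ℝ, 1 ≤ R → ‖∫ x in (-R)..R, g (x : ℂ)‖ ≤ 4 * Ctil * R ^ (1 - α) := by
    intro R hR
    have hR0 : (0:ℝ) < R := by linarith
    have hRneg : -R ≤ 0 := by linarith
    have key := Complex.integral_boundary_rect_eq_zero_of_differentiable_on_off_countable g
      ⟨-R, -R⟩ ⟨R, 0⟩ ∅ Set.countable_empty ?_ ?_
    rotate_left
    · -- continuity on the rectangle
      refine hgcont.mono ?_
      intro p hp
      have h2 := (Complex.mem_reProdIm.mp hp).2
      rw [Set.uIcc_of_le (show (-R:ℝ) ≤ 0 by linarith)] at h2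
      exact h2.2
    · -- differentiability inside
      intro p hp
      have h2 := (Complex.mem_reProdIm.mp hp.1).2
      rw [min_eq_left hRneg, max_eq_right hRneg] at h2
      have him : p.im < 0 := h2.2
      have hopen : IsOpen {z : ℂ | z.im < 0} := isOpen_Iio.preimage Complex.continuous_im
      exact (hdiff.differentiableAt (hopen.mem_nhds him)).smul (hFdiff p)
    -- deduce the bound
    simp only [Complex.ofReal_zero, zero_mul, add_zero, Complex.ofReal_neg] at key
    rw [sub_eq_zero] at key
    have hmid : (∫ x : ℝ in (-R)..R, g (x : ℂ))
        = (∫ x : ℝ in (-R)..R, g ((x : ℂ) + (-(R:ℂ)) * Complex.I))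
          + Complex.I • (∫ y : ℝ in (-R)..0, g ((R:ℂ) + (y:ℂ) * Complex.I))
          - Complex.I • (∫ y : ℝ in (-R)..0, g ((-(R:ℂ)) + (y:ℂ) * Complex.I)) := by
      rw [← key]; abel
    set C : ℝ := Ctil * R ^ (-α) with hC_def
    have hIoc : Set.uIoc (-R) (0:ℝ) = Set.Ioc (-R) 0 := Set.uIoc_of_le hRneg
    have hb1 : ‖∫ x : ℝ in (-R)..R, g ((x : ℂ) + (-(R:ℂ)) * Complex.I)‖ ≤ C * (2 * R) := by
      have := intervalIntegral.norm_integral_le_of_norm_le_const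
        (C := C) (f := fun x : ℝ => g ((x : ℂ) + (-(R:ℂ)) * Complex.I)) (a := -R) (b := R) ?_
      · calc ‖_‖ ≤ C * |R - (-R)| := this
          _ = C * (2 * R) := by rw [_root_.abs_of_pos (by linarith)]; ring
      · intro x hx
        set p : ℂ := (x : ℂ) + (-(R:ℂ)) * Complex.I with hp_def
        have him : p.im = -R := by simp [hp_def]
        have hple : p.im ≤ 0 := by rw [him]; linarith
        have hnp : R ≤ ‖p‖ := by
          calc R = |p.im| := by rw [him, abs_neg, _root_.abs_of_pos hR0]
            _ ≤ ‖p‖ := by exact Complex.abs_im_le_norm p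
        exact le_trans (hgle p hple) (hf_decay R p hR0 hple hnp)
    have hb2 : ‖∫ y : ℝ in (-R)..0, g ((R:ℂ) + (y:ℂ) * Complex.I)‖ ≤ C * R := by
      have := intervalIntegral.norm_integral_le_of_norm_le_const
        (C := C) (f := fun y : ℝ => g ((R:ℂ) + (y:ℂ) * Complex.I)) (a := -R) (b := 0) ?_
      · calc ‖_‖ ≤ C * |0 - (-R)| := this
          _ = C * R := by rw [sub_neg_eq_add, zero_add, _root_.abs_of_pos hR0]
      · intro y hy
        rw [hIoc] at hy
        set p : ℂ := (R:ℂ) + (y:ℂ) * Complex.I with hp_def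
        have him : p.im = y := by simp [hp_def]
        have hple : p.im ≤ 0 := by rw [him]; exact hy.2
        have hnp : R ≤ ‖p‖ := by
          calc R = |p.re| := by
                have : p.re = R := by simp [hp_def]
                rw [this, _root_.abs_of_pos hR0]
            _ ≤ ‖p‖ := by exact Complex.abs_re_le_norm p
        exact le_trans (hgle p hple) (hf_decay R p hR0 hple hnp)
    have hb3 : ‖∫ y : ℝ in (-R)..0, g ((-(R:ℂ)) + (y:ℂ) * Complex.I)‖ ≤ C * R := by
      have := intervalIntegral.norm_integral_le_of_norm_le_const
        (C := C) (f := fun y : ℝ => g ((-(R:ℂ)) + (y:ℂ) * Complex.I)) (a := -R) (b := 0) ?_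
      · calc ‖_‖ ≤ C * |0 - (-R)| := this
          _ = C * R := by rw [sub_neg_eq_add, zero_add, _root_.abs_of_pos hR0]
      · intro y hy
        rw [hIoc] at hy
        set p : ℂ := (-(R:ℂ)) + (y:ℂ) * Complex.I with hp_def
        have him : p.im = y := by simp [hp_def]
        have hple : p.im ≤ 0 := by rw [him]; exact hy.2
        have hnp : R ≤ ‖p‖ := by
          calc R = |p.re| := by
                have : p.re = -R := by simp [hp_def]
                rw [this, abs_neg, _root_.abs_of_pos hR0]
            _ ≤ ‖p‖ := by exact Complex.abs_re_le_norm p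
        exact le_trans (hgle p hple) (hf_decay R p hR0 hple hnp)
    calc ‖∫ x : ℝ in (-R)..R, g (x : ℂ)‖
        = ‖(∫ x : ℝ in (-R)..R, g ((x : ℂ) + (-(R:ℂ)) * Complex.I))
            + Complex.I • (∫ y : ℝ in (-R)..0, g ((R:ℂ) + (y:ℂ) * Complex.I))
            - Complex.I • (∫ y : ℝ in (-R)..0, g ((-(R:ℂ)) + (y:ℂ) * Complex.I))‖ := by
          rw [hmid]
      _ ≤ ‖(∫ x : ℝ in (-R)..R, g ((x : ℂ) + (-(R:ℂ)) * Complex.I))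
            + Complex.I • (∫ y : ℝ in (-R)..0, g ((R:ℂ) + (y:ℂ) * Complex.I))‖
            + ‖Complex.I • (∫ y : ℝ in (-R)..0, g ((-(R:ℂ)) + (y:ℂ) * Complex.I))‖ :=
          norm_sub_le _ _
      _ ≤ (‖∫ x : ℝ in (-R)..R, g ((x : ℂ) + (-(R:ℂ)) * Complex.I)‖
            + ‖Complex.I • (∫ y : ℝ in (-R)..0, g ((R:ℂ) + (y:ℂ) * Complex.I))‖)
            + ‖Complex.I • (∫ y : ℝ in (-R)..0, g ((-(R:ℂ)) + (y:ℂ) * Complex.I))‖ :=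
          add_le_add_left (norm_add_le _ _) _
      _ = ‖∫ x : ℝ in (-R)..R, g ((x : ℂ) + (-(R:ℂ)) * Complex.I)‖
            + ‖∫ y : ℝ in (-R)..0, g ((R:ℂ) + (y:ℂ) * Complex.I)‖
            + ‖∫ y : ℝ in (-R)..0, g ((-(R:ℂ)) + (y:ℂ) * Complex.I)‖ := by
          have e2 : ‖Complex.I • (∫ y : ℝ in (-R)..0, g ((R:ℂ) + (y:ℂ) * Complex.I))‖
              = ‖Complex.I‖ * ‖∫ y : ℝ in (-R)..0, g ((R:ℂ) + (y:ℂ) * Complex.I)‖ :=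
            norm_smul Complex.I (∫ y : ℝ in (-R)..0, g ((R:ℂ) + (y:ℂ) * Complex.I))
          have e3 : ‖Complex.I • (∫ y : ℝ in (-R)..0, g ((-(R:ℂ)) + (y:ℂ) * Complex.I))‖
              = ‖Complex.I‖ * ‖∫ y : ℝ in (-R)..0, g ((-(R:ℂ)) + (y:ℂ) * Complex.I)‖ :=
            norm_smul Complex.I (∫ y : ℝ in (-R)..0, g ((-(R:ℂ)) + (y:ℂ) * Complex.I))
          rw [e2, e3, Complex.norm_I, one_mul, one_mul]
      _ ≤ C * (2 * R) + C * R + C * R :=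
          add_le_add (add_le_add hb1 hb2) hb3
      _ = 4 * Ctil * R ^ (1 - α) := by
          rw [hC_def, show (1 - α) = 1 + -α by ring, Real.rpow_add hR0, Real.rpow_one]
          ring
  -- pass to the limit
  have h1 : Filter.Tendsto (fun R : ℝ => ∫ x : ℝ in (-R)..R, g (x:ℂ)) Filter.atTop
      (nhds (∫ x : ℝ, g (x:ℂ))) :=
    intervalIntegral_tendsto_integral hIntg Filter.tendsto_neg_atTop_atBot Filter.tendsto_id
  have h2 : Filter.Tendsto (fun R : ℝ => ∫ x : ℝ in (-R)..R, g (x:ℂ)) Filter.atTop (nhds 0) := by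
    have h3 : Filter.Tendsto (fun R : ℝ => 4 * Ctil * R ^ (-(α - 1))) Filter.atTop (nhds 0) := by
      have h4 := (tendsto_rpow_neg_atTop (show (0:ℝ) < α - 1 by linarith)).const_mul (4 * Ctil)
      simpa using h4
    refine squeeze_zero_norm' ?_ h3
    filter_upwards [Filter.eventually_ge_atTop (1:ℝ)] with R hR
    have h5 := hrect R hR
    rwa [show (1 - α) = -(α - 1) by ring] at h5
  exact tendsto_nhds_unique h1 h2
end
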